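/- Let (G,Δ,ε,φ,S,α,β) be a finite-dimensional quasi-Hopf algebra over a field k with invertible antipode S, let Ĝ⋈G be the diagonal crossed product (the quantum double D(G)), let A be a unital associative k-algebra and γ : G → A a unital algebra homomorphism. Then the relation γ_L(φ⋈a) := (φ⊗id)(L)·γ(a) establishes a one-to-one correspondence between: (1) unital algebra homomorphisms γ_L : Ĝ⋈G → A with γ_L(ε⋈a) = γ(a) for all a ∈ G; and (2) elements L ∈ G⊗A satisfying (ε⊗id)(L) = 1_A together with [1⊗γ(a)]·L = [S⁻¹(a₍₁₎')⊗1]·L·[a₍₋₁₎⊗γ(a₍₀₎)] for all a ∈ G (where δ(a) = a₍₋₁₎⊗a₍₀₎⊗a₍₁₎' with δ := (Δ⊗id)∘Δ) and L¹³·L²³ = [Ω⁵⊗Ω⁴⊗1_A]·(Δ⊗id)(L)·[Ω¹⊗Ω²⊗γ(Ω³)], where Ω := (id⊗id⊗id⊗S⁻¹⊗S⁻¹)(f⁴⁵·Φ⁻¹). -/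

import Mathlib

open TensorProduct

set_option maxSynthPendingDepth 8
set_option synthInstance.maxHeartbeats 1000000
set_option maxHeartbeats 1000000

noncomputable section

namespace QHA

variable (k G : Type) [Field k] [Ring G] [Algebra k G]

/-- The data of a (finite-dimensional) quasi-Hopf algebra: coproduct, counit,
reassociator (together with its inverse), antipode (as an invertible linear map)
and the elements `α`, `β`. -/
structure QuasiHopfData : Type where
  Δ : G →ₐ[k] G ⊗[k] G
  ε : G →ₐ[k] k
  φ : G ⊗[k] (G ⊗[k] G)
  φ' : G ⊗[k] (G ⊗[k] G)
  S : G ≃ₗ[k] G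
  α : G
  β : G

/-- Swap of legs 2 and 3 of the triple tensor product. -/
def c23 : G ⊗[k] (G ⊗[k] G) →ₐ[k] G ⊗[k] (G ⊗[k] G) :=
  Algebra.TensorProduct.map (AlgHom.id k G) (Algebra.TensorProduct.comm k G G).toAlgHom

/-- Swap of legs 1 and 2 of the triple tensor product. -/
def c12 : G ⊗[k] (G ⊗[k] G) →ₐ[k] G ⊗[k] (G ⊗[k] G) :=
  ((Algebra.TensorProduct.assoc k k k G G G).toAlgHom.comp
    (Algebra.TensorProduct.map (Algebra.TensorProduct.comm k G G).toAlgHom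
      (AlgHom.id k G))).comp
    (Algebra.TensorProduct.assoc k k k G G G).symm.toAlgHom

/-- Place an element of `G ⊗ G` in legs 1,2 of `G ⊗ G ⊗ G`. -/
def e12 : G ⊗[k] G →ₐ[k] G ⊗[k] (G ⊗[k] G) :=
  Algebra.TensorProduct.map (AlgHom.id k G) Algebra.TensorProduct.includeLeft

/-- Place an element of `G ⊗ G` in legs 1,3 of `G ⊗ G ⊗ G`. -/
def e13 : G ⊗[k] G →ₐ[k] G ⊗[k] (G ⊗[k] G) :=
  Algebra.TensorProduct.map (AlgHom.id k G) Algebra.TensorProduct.includeRight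

/-- Place an element of `G ⊗ G` in legs 2,3 of `G ⊗ G ⊗ G`. -/
def e23 : G ⊗[k] G →ₐ[k] G ⊗[k] (G ⊗[k] G) :=
  Algebra.TensorProduct.includeRight

/-- `ψ ⊗ 1`, an element of `G ⊗ G ⊗ G` placed in legs 1,2,3 of the 4-fold
tensor product. -/
def padR (ψ : G ⊗[k] (G ⊗[k] G)) : G ⊗[k] (G ⊗[k] (G ⊗[k] G)) :=
  (Algebra.TensorProduct.map (AlgHom.id k G) (Algebra.TensorProduct.assoc k k k G G G).toAlgHom)
    ((Algebra.TensorProduct.assoc k k k G (G ⊗[k] G) G) (ψ ⊗ₜ[k] (1:G)))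

/-- The product on the tensor product of two (not necessarily unital/associative)
algebras given by bilinear multiplications `mV`, `mW`. -/
def mulTens {V W : Type} [AddCommGroup V] [Module k V] [AddCommGroup W] [Module k W]
    (mV : V →ₗ[k] V →ₗ[k] V) (mW : W →ₗ[k] W →ₗ[k] W) :
    (V ⊗[k] W) →ₗ[k] (V ⊗[k] W) →ₗ[k] (V ⊗[k] W) :=
  TensorProduct.curry ((TensorProduct.map (TensorProduct.lift mV) (TensorProduct.lift mW)) ∘ₗ
    (TensorProduct.tensorTensorTensorComm k V W V W).toLinearMap)

/-- The functional `x ↦ χ (d * x * c)`; this is `c ⇀ χ ↼ d` in Hopf algebra notation. -/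
def shiftF (c d : G) (χ : Module.Dual k G) : Module.Dual k G :=
  χ ∘ₗ (LinearMap.mulLeft k d) ∘ₗ (LinearMap.mulRight k c)

namespace QuasiHopfData

variable {k G}
variable (H : QuasiHopfData k G)

/-- The opposite coproduct `Δᵒᵖ = τ ∘ Δ`. -/
def Δop : G →ₐ[k] G ⊗[k] G := (Algebra.TensorProduct.comm k G G).toAlgHom.comp H.Δ

/-- `(id ⊗ Δ) ∘ Δ`. -/
def ΔR : G →ₐ[k] G ⊗[k] (G ⊗[k] G) :=
  (Algebra.TensorProduct.map (AlgHom.id k G) H.Δ).comp H.Δ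

/-- `(Δ ⊗ id) ∘ Δ` (reassociated); this is the two-sided coaction `δ`. -/
def ΔL : G →ₐ[k] G ⊗[k] (G ⊗[k] G) :=
  ((Algebra.TensorProduct.assoc k k k G G G).toAlgHom.comp
    (Algebra.TensorProduct.map H.Δ (AlgHom.id k G))).comp H.Δ

/-- `id ⊗ id ⊗ Δ` on the triple tensor product. -/
def ooΔ : G ⊗[k] (G ⊗[k] G) →ₐ[k] G ⊗[k] (G ⊗[k] (G ⊗[k] G)) :=
  Algebra.TensorProduct.map (AlgHom.id k G) (Algebra.TensorProduct.map (AlgHom.id k G) H.Δ)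

/-- `Δ ⊗ id ⊗ id` on the triple tensor product. -/
def Δoo : G ⊗[k] (G ⊗[k] G) →ₐ[k] G ⊗[k] (G ⊗[k] (G ⊗[k] G)) :=
  (Algebra.TensorProduct.assoc k k k G G (G ⊗[k] G)).toAlgHom.comp
    (Algebra.TensorProduct.map H.Δ (AlgHom.id k (G ⊗[k] G)))

/-- `id ⊗ Δ ⊗ id` on the triple tensor product. -/
def oΔo : G ⊗[k] (G ⊗[k] G) →ₐ[k] G ⊗[k] (G ⊗[k] (G ⊗[k] G)) :=
  (Algebra.TensorProduct.map (AlgHom.id k G)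
      (Algebra.TensorProduct.assoc k k k G G G).toAlgHom).comp
    (Algebra.TensorProduct.map (AlgHom.id k G)
      (Algebra.TensorProduct.map H.Δ (AlgHom.id k G)))

/-- Contraction of the first tensor leg with the counit. -/
def κ1 (M : Type) [Ring M] [Algebra k M] : G ⊗[k] M →ₐ[k] M :=
  (Algebra.TensorProduct.lid k M).toAlgHom.comp
    (Algebra.TensorProduct.map H.ε (AlgHom.id k M))

/-- Contraction of the last tensor leg with the counit. -/
def κ2 (M : Type) [Ring M] [Algebra k M] : M ⊗[k] G →ₐ[k] M :=
  (Algebra.TensorProduct.rid k k M).toAlgHom.comp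
    (Algebra.TensorProduct.map (AlgHom.id k M) H.ε)

/-- The multiplication on the dual space `Ĝ`, `⟨χξ, a⟩ = ⟨χ ⊗ ξ, Δ(a)⟩`. -/
def dmul (χ ξ : Module.Dual k G) : Module.Dual k G :=
  ((LinearMap.mul' k k) ∘ₗ (TensorProduct.map χ ξ)) ∘ₗ H.Δ.toLinearMap

/-- The axioms of a quasi-Hopf algebra for the data `H`. -/
structure IsQuasiHopf : Prop where
  S_mul : ∀ a b : G, H.S (a * b) = H.S b * H.S a
  S_one : H.S 1 = 1
  φ_mul_inv : H.φ * H.φ' = 1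
  φ_inv_mul : H.φ' * H.φ = 1
  Δ_assoc : ∀ a : G, H.ΔR a * H.φ = H.φ * H.ΔL a
  pentagon : H.ooΔ H.φ * H.Δoo H.φ =
    ((1:G) ⊗ₜ[k] H.φ) * H.oΔo H.φ * QHA.padR k G H.φ
  counit_left : ∀ a : G, H.κ1 G (H.Δ a) = a
  counit_right : ∀ a : G, H.κ2 G (H.Δ a) = a
  counit_mid : (Algebra.TensorProduct.map (AlgHom.id k G) (H.κ1 G)) H.φ = 1
  antipode_left : ∀ a : G,
    (LinearMap.mul' k G) (TensorProduct.map
      ((LinearMap.mulRight k H.α) ∘ₗ H.S.toLinearMap) LinearMap.id (H.Δ a)) = H.ε a • H.α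
  antipode_right : ∀ a : G,
    (LinearMap.mul' k G) (TensorProduct.map
      (LinearMap.mulRight k H.β) H.S.toLinearMap (H.Δ a)) = H.ε a • H.β
  antipode_φ :
    (LinearMap.mul' k G) (TensorProduct.map (LinearMap.mulRight k H.β)
      ((LinearMap.mul' k G) ∘ₗ (TensorProduct.map
        ((LinearMap.mulRight k H.α) ∘ₗ H.S.toLinearMap) LinearMap.id)) H.φ) = 1
  antipode_φ' :
    (LinearMap.mul' k G) (TensorProduct.map
      ((LinearMap.mulRight k H.α) ∘ₗ H.S.toLinearMap)
      ((LinearMap.mul' k G) ∘ₗ (TensorProduct.map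
        (LinearMap.mulRight k H.β) H.S.toLinearMap)) H.φ') = 1

/-- Quasitriangularity of an element `R` (with specified two-sided inverse `Rinv`)
for the quasi-Hopf algebra `H`:  the intertwining property and the two hexagon
relations, with the leg-numbering conventions of the paper. -/
structure IsQT (R Rinv : G ⊗[k] G) : Prop where
  mul_inv : R * Rinv = 1
  inv_mul : Rinv * R = 1
  intertwine : ∀ a : G, H.Δop a * R = R * H.Δ a
  hexagon1 : (Algebra.TensorProduct.assoc k k k G G G)
      ((Algebra.TensorProduct.map H.Δ (AlgHom.id k G)) R)
    = QHA.c23 k G (QHA.c12 k G H.φ) * QHA.e13 k G R * QHA.c23 k G H.φ' *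
      QHA.e23 k G R * H.φ
  hexagon2 : (Algebra.TensorProduct.map (AlgHom.id k G) H.Δ) R
    = QHA.c12 k G (QHA.c23 k G H.φ') * QHA.e13 k G R * QHA.c12 k G H.φ *
      QHA.e12 k G R * H.φ'

end QuasiHopfData

end QHA

namespace QHA

variable (k G : Type) [Field k] [Ring G] [Algebra k G]

/-- Place a 4-tensor into legs 1–4 of the 5-fold tensor product. -/
def pad4 : G ⊗[k] (G ⊗[k] (G ⊗[k] G)) →ₐ[k] G ⊗[k] (G ⊗[k] (G ⊗[k] (G ⊗[k] G))) :=
  Algebra.TensorProduct.map (AlgHom.id k G) (Algebra.TensorProduct.map (AlgHom.id k G)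
    (Algebra.TensorProduct.map (AlgHom.id k G)
      (Algebra.TensorProduct.includeLeft : G →ₐ[k] G ⊗[k] G)))

/-- Place a 3-tensor into legs 1–3 of the 5-fold tensor product. -/
def pad3 : G ⊗[k] (G ⊗[k] G) →ₐ[k] G ⊗[k] (G ⊗[k] (G ⊗[k] (G ⊗[k] G))) :=
  Algebra.TensorProduct.map (AlgHom.id k G) (Algebra.TensorProduct.map (AlgHom.id k G)
    (Algebra.TensorProduct.includeLeft : G →ₐ[k] G ⊗[k] (G ⊗[k] G)))

/-- Place a 2-tensor into legs 4,5 of the 5-fold tensor product. -/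
def pad45 : G ⊗[k] G →ₐ[k] G ⊗[k] (G ⊗[k] (G ⊗[k] (G ⊗[k] G))) :=
  (Algebra.TensorProduct.includeRight :
      (G ⊗[k] (G ⊗[k] (G ⊗[k] G))) →ₐ[k] G ⊗[k] (G ⊗[k] (G ⊗[k] (G ⊗[k] G)))).comp
    ((Algebra.TensorProduct.includeRight :
        (G ⊗[k] (G ⊗[k] G)) →ₐ[k] G ⊗[k] (G ⊗[k] (G ⊗[k] G))).comp
      (Algebra.TensorProduct.includeRight :
        (G ⊗[k] G) →ₐ[k] G ⊗[k] (G ⊗[k] G)))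

/-- Place a 2-tensor into legs 1,2 of the 5-fold tensor product. -/
def pad12 : G ⊗[k] G →ₐ[k] G ⊗[k] (G ⊗[k] (G ⊗[k] (G ⊗[k] G))) :=
  Algebra.TensorProduct.map (AlgHom.id k G)
    (Algebra.TensorProduct.includeLeft : G →ₐ[k] G ⊗[k] (G ⊗[k] (G ⊗[k] G)))

/-- Contraction of the first leg of `G ⊗ A` with a functional. -/
def contractL {A : Type} [AddCommGroup A] [Module k A]
    (χ : Module.Dual k G) (L : G ⊗[k] A) : A :=
  (TensorProduct.lid k A) ((TensorProduct.map χ LinearMap.id) L)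

namespace QuasiHopfData

variable {k G}
variable (H : QuasiHopfData k G)

/-- Apply `Δ` to the first leg of `G ⊗ M`. -/
def coact (M : Type) [Ring M] [Algebra k M] : G ⊗[k] M →ₐ[k] G ⊗[k] (G ⊗[k] M) :=
  (Algebra.TensorProduct.assoc k k k G G M).toAlgHom.comp
    (Algebra.TensorProduct.map H.Δ (AlgHom.id k M))

/-- `(δ ⊗ id ⊗ id)` from the 3-fold to the 5-fold tensor product. -/
def δexp : G ⊗[k] (G ⊗[k] G) →ₐ[k] G ⊗[k] (G ⊗[k] (G ⊗[k] (G ⊗[k] G))) :=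
  ((Algebra.TensorProduct.map (AlgHom.id k G)
      (Algebra.TensorProduct.assoc k k k G G (G ⊗[k] G)).toAlgHom).comp
    (Algebra.TensorProduct.assoc k k k G (G ⊗[k] G) (G ⊗[k] G)).toAlgHom).comp
    (Algebra.TensorProduct.map H.ΔL (AlgHom.id k (G ⊗[k] G)))

/-- The reassociator `Φ` of the two-sided coaction `(δ, Φ)`:
`Φ = [(id⊗Δ⊗id)(φ)⊗1]·[φ⊗1⊗1]·[(δ⊗id⊗id)(φ⁻¹)]`. -/
def bigΦ : G ⊗[k] (G ⊗[k] (G ⊗[k] (G ⊗[k] G))) :=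
  QHA.pad4 k G (H.oΔo H.φ) * QHA.pad3 k G H.φ * H.δexp H.φ'

/-- `id ⊗ id ⊗ id ⊗ S⁻¹ ⊗ S⁻¹` on the 5-fold tensor product. -/
def idS2 : G ⊗[k] (G ⊗[k] (G ⊗[k] (G ⊗[k] G))) →ₗ[k]
    G ⊗[k] (G ⊗[k] (G ⊗[k] (G ⊗[k] G))) :=
  TensorProduct.map LinearMap.id (TensorProduct.map LinearMap.id
    (TensorProduct.map LinearMap.id
      (TensorProduct.map H.S.symm.toLinearMap H.S.symm.toLinearMap)))

/-- The canonical embedding `i_D : G → Ĝ ⊗ G`, `a ↦ ε ⊗ a`. -/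
def iD : G →ₗ[k] Module.Dual k G ⊗[k] G :=
  (TensorProduct.mk k (Module.Dual k G) G) H.ε.toLinearMap

/-- The unit `ε ⊗ 1` of the quantum double. -/
def oneD : Module.Dual k G ⊗[k] G := H.ε.toLinearMap ⊗ₜ[k] (1:G)

/-- The defining formula for the multiplication of the diagonal crossed product
`Ĝ ⋈ G` (Eq. (3.2) of the paper):  for all Sweedler-type decompositions of `Ω`,
of `ψ` and of `δ(a)`,
`(φ⋈a)(ψ⋈b) = [(Ω¹⇀φ↼Ω⁵)(Ω²⇀ψ₍₂₎↼Ω⁴)] ⋈ [Ω³·(ψ₍₃₎ ▷ a ◁ Ŝ⁻¹(ψ₍₁₎))·b]`. -/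
def CrossChar (Ω : G ⊗[k] (G ⊗[k] (G ⊗[k] (G ⊗[k] G))))
    (m : (Module.Dual k G ⊗[k] G) →ₗ[k] (Module.Dual k G ⊗[k] G) →ₗ[k]
      (Module.Dual k G ⊗[k] G)) : Prop :=
  ∀ (φf ψf : Module.Dual k G) (a b : G),
  ∀ (ι₅ κ ν : Type) (_ : Fintype ι₅) (_ : Fintype κ) (_ : Fintype ν),
  ∀ (O1 O2 O3 O4 O5 : ι₅ → G) (p1 p2 p3 : κ → Module.Dual k G) (am1 a0 a1 : ν → G),
    Ω = ∑ n : ι₅, O1 n ⊗ₜ[k] (O2 n ⊗ₜ[k] (O3 n ⊗ₜ[k] (O4 n ⊗ₜ[k] O5 n))) →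
    (∀ x y z : G, ψf (x * y * z) = ∑ j : κ, p1 j x * p2 j y * p3 j z) →
    H.ΔL a = ∑ l : ν, am1 l ⊗ₜ[k] (a0 l ⊗ₜ[k] a1 l) →
    m (φf ⊗ₜ[k] a) (ψf ⊗ₜ[k] b)
      = ∑ n : ι₅, ∑ j : κ,
          (H.dmul (QHA.shiftF k G (O1 n) (O5 n) φf)
                  (QHA.shiftF k G (O2 n) (O4 n) (p2 j)))
            ⊗ₜ[k]
          (O3 n * (∑ l : ν, (p3 j (am1 l) * p1 j (H.S.symm (a1 l))) • a0 l) * b)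

/-- The conditions of Theorem 3.2 of the paper characterizing the quantum double:
`m` is an associative multiplication with unit `ε ⊗ 1`, such that `i_D` is a
unital algebra embedding and the universal `Δ`-flip operator `D` satisfies the
`Δ`-flip relation and the coherence (hexagon-type) relation. -/
def DoubleMul {ι ι' : Type} [Fintype ι] [Fintype ι'] (X Y Z : ι → G) (P Q R₀ : ι' → G)
    (D : G ⊗[k] (Module.Dual k G ⊗[k] G))
    (m : (Module.Dual k G ⊗[k] G) →ₗ[k] (Module.Dual k G ⊗[k] G) →ₗ[k]
      (Module.Dual k G ⊗[k] G)) : Prop :=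
  (∀ u v w : Module.Dual k G ⊗[k] G, m (m u v) w = m u (m v w)) ∧
  (∀ u : Module.Dual k G ⊗[k] G, m H.oneD u = u) ∧
  (∀ u : Module.Dual k G ⊗[k] G, m u H.oneD = u) ∧
  (∀ a b : G, m (H.iD a) (H.iD b) = H.iD (a * b)) ∧
  (∀ a : G,
    QHA.mulTens k (LinearMap.mul k G) m D
        ((TensorProduct.map LinearMap.id H.iD) (H.Δ a))
      = QHA.mulTens k (LinearMap.mul k G) m
          ((TensorProduct.map LinearMap.id H.iD) (H.Δop a)) D) ∧
  (QHA.mulTens k (LinearMap.mul k G) (QHA.mulTens k (LinearMap.mul k G) m)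
    (QHA.mulTens k (LinearMap.mul k G) (QHA.mulTens k (LinearMap.mul k G) m)
      (QHA.mulTens k (LinearMap.mul k G) (QHA.mulTens k (LinearMap.mul k G) m)
        (QHA.mulTens k (LinearMap.mul k G) (QHA.mulTens k (LinearMap.mul k G) m)
          (∑ i : ι, Y i ⊗ₜ[k] (Z i ⊗ₜ[k] H.iD (X i)))
          ((TensorProduct.map LinearMap.id
            ((TensorProduct.mk k G (Module.Dual k G ⊗[k] G)) 1)) D))
        (∑ j : ι', P j ⊗ₜ[k] (R₀ j ⊗ₜ[k] H.iD (Q j))))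
      ((1:G) ⊗ₜ[k] D))
    ((TensorProduct.map LinearMap.id (TensorProduct.map LinearMap.id H.iD)) H.φ)
  = (TensorProduct.assoc k G G (Module.Dual k G ⊗[k] G))
      ((TensorProduct.map H.Δ.toLinearMap LinearMap.id) D))

end QuasiHopfData

end QHA

namespace QHA

variable {k G : Type} [Field k] [Ring G] [Algebra k G]
variable {A : Type} [Ring A] [Algebra k A]

/-- The conditions on `L ∈ G ⊗ A` of being a normal coherent (left diagonal)
`δ`-implementer with respect to `γ : G → A` (Corollary 3.3 of the paper). -/
def LConds (H : QuasiHopfData k G) (γA : G →ₐ[k] A)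
    (Ω : G ⊗[k] (G ⊗[k] (G ⊗[k] (G ⊗[k] G)))) (L : G ⊗[k] A) : Prop :=
  (H.κ1 A L = 1) ∧
  (∀ a : G, ∀ (ν : Type) (_ : Fintype ν), ∀ am1 a0 a1 : ν → G,
    H.ΔL a = ∑ l : ν, am1 l ⊗ₜ[k] (a0 l ⊗ₜ[k] a1 l) →
    ((1:G) ⊗ₜ[k] γA a) * L
      = ∑ l : ν, (H.S.symm (a1 l) ⊗ₜ[k] (1:A)) * L * (am1 l ⊗ₜ[k] γA (a0 l))) ∧
  (∀ (ι₅ : Type) (_ : Fintype ι₅), ∀ O1 O2 O3 O4 O5 : ι₅ → G,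
    Ω = ∑ n : ι₅, O1 n ⊗ₜ[k] (O2 n ⊗ₜ[k] (O3 n ⊗ₜ[k] (O4 n ⊗ₜ[k] O5 n))) →
    (TensorProduct.map LinearMap.id ((TensorProduct.mk k G A) 1)) L *
        ((1:G) ⊗ₜ[k] L)
      = ∑ n : ι₅, (O5 n ⊗ₜ[k] (O4 n ⊗ₜ[k] (1:A))) *
          ((TensorProduct.assoc k G G A)
            ((TensorProduct.map H.Δ.toLinearMap LinearMap.id) L)) *
          (O1 n ⊗ₜ[k] (O2 n ⊗ₜ[k] γA (O3 n))))

/-- `γ_L : Ĝ ⋈ G → A` is a unital algebra homomorphism extending `γ`. -/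
def GLConds (H : QuasiHopfData k G) (γA : G →ₐ[k] A)
    (m : (Module.Dual k G ⊗[k] G) →ₗ[k] (Module.Dual k G ⊗[k] G) →ₗ[k]
      (Module.Dual k G ⊗[k] G))
    (γL : Module.Dual k G ⊗[k] G →ₗ[k] A) : Prop :=
  (∀ u v : Module.Dual k G ⊗[k] G, γL (m u v) = γL u * γL v) ∧
  (γL H.oneD = 1) ∧
  (∀ a : G, γL (H.iD a) = γA a)

/-- The relation `γ_L(φ ⋈ a) = (φ ⊗ id)(L) · γ(a)`. -/
def LRel (H : QuasiHopfData k G) (γA : G →ₐ[k] A) (L : G ⊗[k] A)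
    (γL : Module.Dual k G ⊗[k] G →ₗ[k] A) : Prop :=
  ∀ (φf : Module.Dual k G) (a : G),
    γL (φf ⊗ₜ[k] a) = QHA.contractL k G φf L * γA a

end QHA

/-! Write `⟨χ, L⟩` for the slice of `L ∈ G ⊗ A` by `χ ∈ Ĝ`. As `G` is finite-dimensional,
`L` is determined by its slices, and slicing turns the normality, `δ`-implementer and coherence
conditions on `L` into

* `⟨ε, L⟩ = 1`,
* `γ(a) ⟨ψ, L⟩ = ∑ ⟨a₍₋₁₎ ⇀ ψ ↼ S⁻¹(a₍₁₎'), L⟩ γ(a₍₀₎)`,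
* `⟨φ, L⟩ ⟨ξ, L⟩ = ∑ ⟨(Ω¹ ⇀ φ ↼ Ω⁵)(Ω² ⇀ ξ ↼ Ω⁴), L⟩ γ(Ω³)`.

Once the coproduct of `ψ` is absorbed into `a₍₋₁₎ ⇀ ψ ↼ S⁻¹(a₍₁₎')`, the product formula of
`Ĝ ⋈ G` shows that these are precisely the conditions for `φ ⋈ a ↦ ⟨φ, L⟩ γ(a)` to be
multiplicative. Conversely, an algebra map `γ_L` extending `γ` satisfies
`γ_L(χ ⋈ a) = γ_L(χ ⋈ 1) γ(a)`, because `(χ ⋈ 1)(ε ⋈ a) = (χ ⋈ a)(ε ⋈ 1)`, so `γ_L` is of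
this form with `⟨χ, L⟩ = γ_L(χ ⋈ 1)`.
-/

namespace QHA

section Slice

variable {R M N : Type*} [CommSemiring R] [AddCommMonoid M] [Module R M]
  [AddCommMonoid N] [Module R N]

def slice : Module.Dual R M →ₗ[R] M ⊗[R] N →ₗ[R] N :=
  LinearMap.llcomp R (M ⊗[R] N) (R ⊗[R] N) N (TensorProduct.lid R N).toLinearMap ∘ₗ
    LinearMap.rTensorHom N

@[simp] lemma slice_tmul (χ : Module.Dual R M) (x : M) (y : N) :
    slice χ (x ⊗ₜ[R] y) = χ x • y := by
  simp [slice]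

lemma sum_tmul_slice_coord {ι : Type*} [Fintype ι] (b : Module.Basis ι R M)
    (x : M ⊗[R] N) : ∑ i, b i ⊗ₜ[R] slice (b.coord i) x = x := by
  induction x using TensorProduct.induction_on with
  | zero => simp
  | tmul x y =>
    simp only [slice_tmul, Module.Basis.coord_apply, TensorProduct.tmul_smul,
      TensorProduct.smul_tmul', ← TensorProduct.sum_tmul, Module.Basis.sum_repr]
  | add x y hx hy =>
    simp only [map_add, TensorProduct.tmul_add, Finset.sum_add_distrib, hx, hy]

variable [Module.Free R M] [Module.Finite R M]

lemma ext_slice {x y : M ⊗[R] N} (h : ∀ χ : Module.Dual R M, slice χ x = slice χ y) :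
    x = y := by
  rw [← sum_tmul_slice_coord (Module.Free.chooseBasis R M) x,
    ← sum_tmul_slice_coord (Module.Free.chooseBasis R M) y]
  simp only [h]

lemma ext_slice₂ {x y : M ⊗[R] (M ⊗[R] N)}
    (h : ∀ χ ξ : Module.Dual R M, slice ξ (slice χ x) = slice ξ (slice χ y)) : x = y :=
  ext_slice fun χ => ext_slice fun ξ => h χ ξ

end Slice

section Decompositions

variable {R M₁ M₂ M₃ M₄ M₅ : Type*} [CommSemiring R]
  [AddCommMonoid M₁] [Module R M₁] [AddCommMonoid M₂] [Module R M₂]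
  [AddCommMonoid M₃] [Module R M₃] [AddCommMonoid M₄] [Module R M₄]
  [AddCommMonoid M₅] [Module R M₅]

lemma exists_sum_tmul_tmul (x : M₁ ⊗[R] (M₂ ⊗[R] M₃)) :
    ∃ (ι : Type) (_ : Fintype ι) (f₁ : ι → M₁) (f₂ : ι → M₂) (f₃ : ι → M₃),
      x = ∑ i, f₁ i ⊗ₜ[R] (f₂ i ⊗ₜ[R] f₃ i) := by
  obtain ⟨n, f₁, y, rfl⟩ := TensorProduct.exists_sum_tmul_eq x
  choose K f₂ f₃ hy using fun i => TensorProduct.exists_sum_tmul_eq (y i)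
  refine ⟨Σ i, Fin (K i), inferInstance, fun p => f₁ p.1, fun p => f₂ p.1 p.2,
    fun p => f₃ p.1 p.2, ?_⟩
  simp only [hy, TensorProduct.tmul_sum, Fintype.sum_sigma]

lemma exists_sum_tmul_tmul_tmul_tmul (x : M₁ ⊗[R] (M₂ ⊗[R] (M₃ ⊗[R] (M₄ ⊗[R] M₅)))) :
    ∃ (ι : Type) (_ : Fintype ι) (f₁ : ι → M₁) (f₂ : ι → M₂) (f₃ : ι → M₃)
      (f₄ : ι → M₄) (f₅ : ι → M₅),
      x = ∑ i, f₁ i ⊗ₜ[R] (f₂ i ⊗ₜ[R] (f₃ i ⊗ₜ[R] (f₄ i ⊗ₜ[R] f₅ i))) := by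
  obtain ⟨ι, _, f₁, f₂, y, rfl⟩ := exists_sum_tmul_tmul x
  choose K _ f₃ f₄ f₅ hy using fun i => exists_sum_tmul_tmul (y i)
  refine ⟨Σ i, K i, inferInstance, fun p => f₁ p.1, fun p => f₂ p.1, fun p => f₃ p.1 p.2,
    fun p => f₄ p.1 p.2, fun p => f₅ p.1 p.2, ?_⟩
  simp only [hy, TensorProduct.tmul_sum, Fintype.sum_sigma]

end Decompositions

section Functionals

variable {k G : Type} [Field k] [Ring G] [Algebra k G]

lemma shiftF_apply (c d : G) (χ : Module.Dual k G) (x : G) :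
    shiftF k G c d χ x = χ (d * x * c) := by
  simp [shiftF, mul_assoc]

@[simp] lemma shiftF_one_one (χ : Module.Dual k G) : shiftF k G 1 1 χ = χ := by
  ext x
  simp [shiftF_apply]

lemma shiftF_sum_smul {κ : Type*} (s : Finset κ) (c d : G) (e : κ → k)
    (χ : κ → Module.Dual k G) :
    shiftF k G c d (∑ j ∈ s, e j • χ j) = ∑ j ∈ s, e j • shiftF k G c d (χ j) := by
  ext x
  simp [shiftF_apply]

lemma sum_smul_eq_shiftF {κ : Type*} [Fintype κ] {ψ : Module.Dual k G}
    {p₁ p₂ p₃ : κ → Module.Dual k G}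
    (hψ : ∀ x y z, ψ (x * y * z) = ∑ j, p₁ j x * p₂ j y * p₃ j z) (c d : G) :
    ∑ j, (p₃ j c * p₁ j d) • p₂ j = shiftF k G c d ψ := by
  ext y
  simp only [LinearMap.coe_sum, Finset.sum_apply, LinearMap.smul_apply, smul_eq_mul,
    shiftF_apply, hψ]
  exact Finset.sum_congr rfl fun j _ => by ring

lemma exists_sum_mul_mul_eq [FiniteDimensional k G] (ψ : Module.Dual k G) :
    ∃ (κ : Type) (_ : Fintype κ) (p₁ p₂ p₃ : κ → Module.Dual k G),
      ∀ x y z, ψ (x * y * z) = ∑ j, p₁ j x * p₂ j y * p₃ j z := by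
  let b := Module.finBasis k G
  refine ⟨_ × _, inferInstance, fun j => b.coord j.1, fun j => b.coord j.2,
    fun j => ψ ∘ₗ LinearMap.mulLeft k (b j.1 * b j.2), fun x y z => ?_⟩
  conv_lhs => rw [← b.sum_repr x, ← b.sum_repr y]
  simp only [Finset.sum_mul, Finset.mul_sum, smul_mul_assoc, mul_smul_comm, map_sum,
    map_smul, Fintype.sum_prod_type, smul_eq_mul, LinearMap.comp_apply,
    LinearMap.mulLeft_apply, Module.Basis.coord_apply, mul_assoc]
  rw [Finset.sum_comm]
  exact Finset.sum_congr rfl fun i _ => Finset.sum_congr rfl fun j _ => by ring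

end Functionals

section AlgebraSlices

variable {k G A : Type} [Field k] [Ring G] [Algebra k G] [Ring A] [Algebra k A]

lemma slice_one_tmul_mul (χ : Module.Dual k G) (c : A) (L : G ⊗[k] A) :
    slice χ (((1 : G) ⊗ₜ[k] c) * L) = c * slice χ L := by
  induction L using TensorProduct.induction_on with
  | zero => simp
  | tmul g x => simp [Algebra.TensorProduct.tmul_mul_tmul]
  | add x y hx hy => simp only [mul_add, map_add, hx, hy]

lemma slice_sandwich (χ : Module.Dual k G) (u p : G) (c : A) (L : G ⊗[k] A) :
    slice χ ((u ⊗ₜ[k] (1 : A)) * L * (p ⊗ₜ[k] c)) = slice (shiftF k G p u χ) L * c := by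
  induction L using TensorProduct.induction_on with
  | zero => simp
  | tmul g x =>
    simp [Algebra.TensorProduct.tmul_mul_tmul, shiftF_apply, mul_assoc]
  | add x y hx hy => simp only [mul_add, add_mul, map_add, hx, hy]

lemma slice_slice_leg13_mul_leg23 (χ ξ : Module.Dual k G) (L L' : G ⊗[k] A) :
    slice ξ (slice χ ((TensorProduct.map LinearMap.id ((TensorProduct.mk k G A) 1)) L *
        ((1 : G) ⊗ₜ[k] L'))) = slice χ L * slice ξ L' := by
  induction L using TensorProduct.induction_on with
  | zero => simp
  | tmul g x =>
    induction L' using TensorProduct.induction_on with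
    | zero => simp
    | tmul h y =>
      simp only [TensorProduct.map_tmul, LinearMap.id_coe, id_eq, TensorProduct.mk_apply,
        Algebra.TensorProduct.tmul_mul_tmul, one_mul, mul_one, slice_tmul, map_smul,
        smul_mul_smul_comm, smul_smul]
    | add u v hu hv => simp only [TensorProduct.tmul_add, mul_add, map_add, hu, hv]
  | add u v hu hv => simp only [map_add, add_mul, hu, hv]

lemma one_tmul_mul_eq_sum_iff [FiniteDimensional k G] {ν : Type*} [Fintype ν] (c : A)
    (L : G ⊗[k] A) (u p : ν → G) (d : ν → A) :
    ((1 : G) ⊗ₜ[k] c) * L = ∑ l, (u l ⊗ₜ[k] (1 : A)) * L * (p l ⊗ₜ[k] d l) ↔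
      ∀ ψ : Module.Dual k G, c * slice ψ L = ∑ l, slice (shiftF k G (p l) (u l) ψ) L * d l := by
  simp only [← slice_one_tmul_mul, ← slice_sandwich, ← map_sum]
  exact ⟨fun h ψ => by rw [h], ext_slice⟩

end AlgebraSlices

namespace QuasiHopfData

variable {k G : Type} [Field k] [Ring G] [Algebra k G] (H : QuasiHopfData k G)

lemma κ1_eq_slice {M : Type} [Ring M] [Algebra k M] (x : G ⊗[k] M) :
    H.κ1 M x = slice H.ε.toLinearMap x := by
  induction x using TensorProduct.induction_on with
  | zero => simp
  | tmul g y => simp [κ1]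
  | add x y hx hy => simp only [map_add, hx, hy]

lemma dmul_sum_smul_right {κ : Type*} (s : Finset κ) (χ : Module.Dual k G) (e : κ → k)
    (ξ : κ → Module.Dual k G) :
    H.dmul χ (∑ j ∈ s, e j • ξ j) = ∑ j ∈ s, e j • H.dmul χ (ξ j) := by
  ext g
  simp only [dmul, LinearMap.comp_apply, LinearMap.coe_sum, Finset.sum_apply,
    LinearMap.smul_apply, AlgHom.toLinearMap_apply]
  generalize H.Δ g = w
  induction w using TensorProduct.induction_on with
  | zero => simp
  | tmul x y => simp [Finset.mul_sum, mul_left_comm]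
  | add x y hx hy => simp only [map_add, hx, hy, Finset.sum_add_distrib, smul_add]

lemma dmul_smul_right (χ ξ : Module.Dual k G) (e : k) :
    H.dmul χ (e • ξ) = e • H.dmul χ ξ := by
  ext g
  simp [dmul, TensorProduct.map_smul_right]

lemma slice_slice_sandwich {A : Type} [Ring A] [Algebra k A] (χ ξ : Module.Dual k G)
    (u v p q : G) (c : A) (L : G ⊗[k] A) :
    slice ξ (slice χ ((u ⊗ₜ[k] (v ⊗ₜ[k] (1 : A))) *
        TensorProduct.assoc k G G A (TensorProduct.map H.Δ.toLinearMap LinearMap.id L) *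
        (p ⊗ₜ[k] (q ⊗ₜ[k] c))))
      = slice (H.dmul (shiftF k G p u χ) (shiftF k G q v ξ)) L * c := by
  induction L using TensorProduct.induction_on with
  | zero => simp
  | tmul g x =>
    simp only [TensorProduct.map_tmul, AlgHom.toLinearMap_apply, LinearMap.id_coe, id_eq,
      slice_tmul, dmul, LinearMap.comp_apply, smul_mul_assoc]
    generalize H.Δ g = w
    induction w using TensorProduct.induction_on with
    | zero => simp
    | tmul s t =>
      simp [Algebra.TensorProduct.tmul_mul_tmul, shiftF_apply, mul_assoc, smul_smul]
    | add w w' hw hw' => simp only [TensorProduct.add_tmul, map_add, add_mul, mul_add,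
        hw, hw', add_smul]
  | add x y hx hy => simp only [map_add, add_mul, mul_add, hx, hy]

lemma leg13_mul_leg23_eq_sum_iff [FiniteDimensional k G] {A : Type} [Ring A] [Algebra k A]
    {ι : Type*} [Fintype ι] (L : G ⊗[k] A) (u v p q : ι → G) (c : ι → A) :
    (TensorProduct.map LinearMap.id ((TensorProduct.mk k G A) 1)) L * ((1 : G) ⊗ₜ[k] L)
        = ∑ n, (u n ⊗ₜ[k] (v n ⊗ₜ[k] (1 : A))) *
          TensorProduct.assoc k G G A (TensorProduct.map H.Δ.toLinearMap LinearMap.id L) *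
          (p n ⊗ₜ[k] (q n ⊗ₜ[k] c n)) ↔
      ∀ χ ξ : Module.Dual k G, slice χ L * slice ξ L
        = ∑ n, slice (H.dmul (shiftF k G (p n) (u n) χ) (shiftF k G (q n) (v n) ξ)) L * c n := by
  simp only [← slice_slice_leg13_mul_leg23, ← slice_slice_sandwich, ← map_sum]
  exact ⟨fun h χ ξ => by rw [h], ext_slice₂⟩

variable {H}

lemma shiftF_counit (c d : G) :
    shiftF k G c d H.ε.toLinearMap = (H.ε d * H.ε c) • H.ε.toLinearMap := by
  ext x
  simp only [shiftF_apply, AlgHom.toLinearMap_apply, map_mul, LinearMap.smul_apply,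
    smul_eq_mul]
  ring

lemma ΔL_one : H.ΔL 1 = ∑ _ : Unit, (1 : G) ⊗ₜ[k] ((1 : G) ⊗ₜ[k] (1 : G)) := by
  simp [Algebra.TensorProduct.one_def]

lemma mul'_map_counit_left (ξ : Module.Dual k G) (w : G ⊗[k] G) :
    LinearMap.mul' k k (TensorProduct.map H.ε.toLinearMap ξ w) = ξ (H.κ1 G w) := by
  induction w using TensorProduct.induction_on with
  | zero => simp
  | tmul x y => simp [κ1]
  | add x y hx hy => simp only [map_add, hx, hy]

lemma mul'_map_counit_right (χ : Module.Dual k G) (w : G ⊗[k] G) :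
    LinearMap.mul' k k (TensorProduct.map χ H.ε.toLinearMap w) = χ (H.κ2 G w) := by
  induction w using TensorProduct.induction_on with
  | zero => simp
  | tmul x y => simp [κ2, mul_comm]
  | add x y hx hy => simp only [map_add, hx, hy]

namespace IsQuasiHopf

lemma dmul_counit_left (hH : H.IsQuasiHopf) (ξ : Module.Dual k G) :
    H.dmul H.ε.toLinearMap ξ = ξ := by
  ext g
  simp only [dmul, LinearMap.comp_apply, AlgHom.toLinearMap_apply, mul'_map_counit_left,
    hH.counit_left]

lemma dmul_counit_right (hH : H.IsQuasiHopf) (χ : Module.Dual k G) :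
    H.dmul χ H.ε.toLinearMap = χ := by
  ext g
  simp only [dmul, LinearMap.comp_apply, AlgHom.toLinearMap_apply, mul'_map_counit_right,
    hH.counit_right]

lemma counit_α_ne_zero (hH : H.IsQuasiHopf) : H.ε H.α ≠ 0 := by
  intro hα
  have key : ∀ w : G ⊗[k] (G ⊗[k] G), H.ε (LinearMap.mul' k G
      (TensorProduct.map (LinearMap.mulRight k H.β) (LinearMap.mul' k G ∘ₗ
        TensorProduct.map (LinearMap.mulRight k H.α ∘ₗ H.S.toLinearMap) LinearMap.id) w))
      = 0 := by
    intro w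
    induction w using TensorProduct.induction_on with
    | zero => simp
    | tmul x yz =>
      induction yz using TensorProduct.induction_on with
      | zero => simp
      | tmul y z => simp [hα]
      | add y z hy hz => simp only [TensorProduct.tmul_add, map_add, hy, hz, add_zero]
    | add x y hx hy => simp only [map_add, hx, hy, add_zero]
  simpa [key] using congrArg H.ε hH.antipode_φ

lemma counit_S (hH : H.IsQuasiHopf) (a : G) : H.ε (H.S a) = H.ε a := by
  have key : ∀ w : G ⊗[k] G, H.ε (LinearMap.mul' k G
      (TensorProduct.map (LinearMap.mulRight k H.α ∘ₗ H.S.toLinearMap) LinearMap.id w))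
      = H.ε H.α * H.ε (H.S (H.κ2 G w)) := by
    intro w
    induction w using TensorProduct.induction_on with
    | zero => simp
    | tmul x y => simp [κ2, mul_comm, mul_left_comm]
    | add x y hx hy => simp only [map_add, hx, hy, mul_add]
  have h := congrArg H.ε (hH.antipode_left a)
  rw [key, hH.counit_right, map_smul, smul_eq_mul] at h
  exact mul_left_cancel₀ hH.counit_α_ne_zero (h.trans (mul_comm _ _))

lemma counit_symm_S (hH : H.IsQuasiHopf) (a : G) : H.ε (H.S.symm a) = H.ε a := by
  rw [← hH.counit_S, H.S.apply_symm_apply]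

lemma symm_S_one (hH : H.IsQuasiHopf) : H.S.symm 1 = 1 :=
  H.S.symm_apply_eq.mpr hH.S_one.symm

lemma sum_counit_ΔL (hH : H.IsQuasiHopf) {ν : Type*} [Fintype ν] {a : G} {am1 a0 a1 : ν → G}
    (hδ : H.ΔL a = ∑ l, am1 l ⊗ₜ[k] (a0 l ⊗ₜ[k] a1 l)) :
    ∑ l, (H.ε (am1 l) * H.ε (H.S.symm (a1 l))) • a0 l = a := by
  have κ_assoc : ∀ (w : G ⊗[k] G) (y : G), H.κ2 G (H.κ1 (G ⊗[k] G)
      (Algebra.TensorProduct.assoc k k k G G G (w ⊗ₜ[k] y))) = H.ε y • H.κ1 G w := by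
    intro w y
    induction w using TensorProduct.induction_on with
    | zero => simp
    | tmul s t => simp [κ1, κ2, smul_smul, mul_comm]
    | add w w' hw hw' => simp only [TensorProduct.add_tmul, map_add, hw, hw', smul_add]
  have key : ∀ w : G ⊗[k] G, H.κ2 G (H.κ1 (G ⊗[k] G) (Algebra.TensorProduct.assoc k k k G G G
      (Algebra.TensorProduct.map H.Δ (AlgHom.id k G) w))) = H.κ2 G w := by
    intro w
    induction w using TensorProduct.induction_on with
    | zero => simp
    | tmul x y =>
      rw [Algebra.TensorProduct.map_tmul, AlgHom.id_apply, κ_assoc, hH.counit_left]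
      simp [κ2]
    | add w w' hw hw' => simp only [map_add, hw, hw']
  calc ∑ l, (H.ε (am1 l) * H.ε (H.S.symm (a1 l))) • a0 l
      = H.κ2 G (H.κ1 (G ⊗[k] G) (H.ΔL a)) := by
        simp [hδ, κ1, κ2, hH.counit_symm_S, smul_smul]
    _ = a := (key (H.Δ a)).trans (hH.counit_right a)

end IsQuasiHopf

namespace CrossChar

variable {Ω : G ⊗[k] (G ⊗[k] (G ⊗[k] (G ⊗[k] G)))}
  {m : (Module.Dual k G ⊗[k] G) →ₗ[k] (Module.Dual k G ⊗[k] G) →ₗ[k] (Module.Dual k G ⊗[k] G)}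
  {ι₅ : Type} [Fintype ι₅] {O1 O2 O3 O4 O5 : ι₅ → G}

theorem mul_tmul [FiniteDimensional k G] (hm : H.CrossChar Ω m)
    (hΩ : Ω = ∑ n, O1 n ⊗ₜ[k] (O2 n ⊗ₜ[k] (O3 n ⊗ₜ[k] (O4 n ⊗ₜ[k] O5 n))))
    {ν : Type} [Fintype ν] {a : G} {am1 a0 a1 : ν → G}
    (hδ : H.ΔL a = ∑ l, am1 l ⊗ₜ[k] (a0 l ⊗ₜ[k] a1 l)) (φf ψf : Module.Dual k G) (b : G) :
    m (φf ⊗ₜ[k] a) (ψf ⊗ₜ[k] b) = ∑ n, ∑ l,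
      H.dmul (shiftF k G (O1 n) (O5 n) φf)
        (shiftF k G (O2 n) (O4 n) (shiftF k G (am1 l) (H.S.symm (a1 l)) ψf))
        ⊗ₜ[k] (O3 n * a0 l * b) := by
  obtain ⟨κ, _, p₁, p₂, p₃, hψ⟩ := exists_sum_mul_mul_eq ψf
  rw [hm φf ψf a b ι₅ κ ν _ _ _ O1 O2 O3 O4 O5 p₁ p₂ p₃ am1 a0 a1 hΩ hψ hδ]
  refine Finset.sum_congr rfl fun n _ => ?_
  simp only [← sum_smul_eq_shiftF hψ, shiftF_sum_smul, dmul_sum_smul_right, Finset.mul_sum,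
    Finset.sum_mul, mul_smul_comm, smul_mul_assoc, TensorProduct.tmul_sum,
    TensorProduct.sum_tmul, TensorProduct.tmul_smul, ← TensorProduct.smul_tmul']
  exact Finset.sum_comm

theorem mul_one_tmul [FiniteDimensional k G] (hH : H.IsQuasiHopf) (hm : H.CrossChar Ω m)
    (hΩ : Ω = ∑ n, O1 n ⊗ₜ[k] (O2 n ⊗ₜ[k] (O3 n ⊗ₜ[k] (O4 n ⊗ₜ[k] O5 n))))
    (φf ψf : Module.Dual k G) (b : G) :
    m (φf ⊗ₜ[k] 1) (ψf ⊗ₜ[k] b) = ∑ n,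
      H.dmul (shiftF k G (O1 n) (O5 n) φf) (shiftF k G (O2 n) (O4 n) ψf) ⊗ₜ[k] (O3 n * b) := by
  simp [hm.mul_tmul hΩ ΔL_one, hH.symm_S_one]

theorem mul_tmul_counit (hH : H.IsQuasiHopf) (hm : H.CrossChar Ω m)
    (hΩ : Ω = ∑ n, O1 n ⊗ₜ[k] (O2 n ⊗ₜ[k] (O3 n ⊗ₜ[k] (O4 n ⊗ₜ[k] O5 n))))
    (φf : Module.Dual k G) (a b : G) :
    m (φf ⊗ₜ[k] a) (H.ε.toLinearMap ⊗ₜ[k] b) = ∑ n,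
      (H.ε (O4 n) * H.ε (O2 n)) • (shiftF k G (O1 n) (O5 n) φf ⊗ₜ[k] (O3 n * a * b)) := by
  obtain ⟨ν, _, am1, a0, a1, hδ⟩ := exists_sum_tmul_tmul (H.ΔL a)
  rw [hm φf H.ε.toLinearMap a b ι₅ Unit ν inferInstance inferInstance inferInstance
    O1 O2 O3 O4 O5 (fun _ => H.ε.toLinearMap) (fun _ => H.ε.toLinearMap)
    (fun _ => H.ε.toLinearMap) am1 a0 a1 hΩ (by simp) hδ]
  simp [shiftF_counit, dmul_smul_right, hH.dmul_counit_right, hH.sum_counit_ΔL hδ,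
    TensorProduct.smul_tmul']

theorem mul_tmul_one [FiniteDimensional k G] (hH : H.IsQuasiHopf) (hm : H.CrossChar Ω m)
    (hΩ : Ω = ∑ n, O1 n ⊗ₜ[k] (O2 n ⊗ₜ[k] (O3 n ⊗ₜ[k] (O4 n ⊗ₜ[k] O5 n))))
    {ν : Type} [Fintype ν] {a : G} {am1 a0 a1 : ν → G}
    (hδ : H.ΔL a = ∑ l, am1 l ⊗ₜ[k] (a0 l ⊗ₜ[k] a1 l)) (φf ψf : Module.Dual k G) :
    m (φf ⊗ₜ[k] a) (ψf ⊗ₜ[k] 1)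
      = ∑ l, m (φf ⊗ₜ[k] 1) (shiftF k G (am1 l) (H.S.symm (a1 l)) ψf ⊗ₜ[k] a0 l) := by
  simp only [hm.mul_tmul hΩ hδ, hm.mul_one_tmul hH hΩ, mul_one]
  exact Finset.sum_comm

end CrossChar

end QuasiHopfData

lemma map_apply_eq_mul_of_tmul {R M N B : Type*} [CommSemiring R] [AddCommMonoid M]
    [Module R M] [AddCommMonoid N] [Module R N] [Semiring B] [Algebra R B]
    (μ : M ⊗[R] N →ₗ[R] M ⊗[R] N →ₗ[R] M ⊗[R] N) (f : M ⊗[R] N →ₗ[R] B)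
    (h : ∀ x y x' y', f (μ (x ⊗ₜ[R] y) (x' ⊗ₜ[R] y')) = f (x ⊗ₜ[R] y) * f (x' ⊗ₜ[R] y'))
    (u v : M ⊗[R] N) : f (μ u v) = f u * f v := by
  have : μ.compr₂ f = (LinearMap.mul R B).compl₁₂ f f :=
    TensorProduct.ext' fun x y => TensorProduct.ext' fun x' y' => h x y x' y'
  exact LinearMap.congr_fun₂ this u v

variable {k G A : Type} [Field k] [Ring G] [Algebra k G] [Ring A] [Algebra k A]
  {H : QuasiHopfData k G} {γA : G →ₐ[k] A} {Ω : G ⊗[k] (G ⊗[k] (G ⊗[k] (G ⊗[k] G)))}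
  {m : (Module.Dual k G ⊗[k] G) →ₗ[k] (Module.Dual k G ⊗[k] G) →ₗ[k] (Module.Dual k G ⊗[k] G)}

lemma contractL_eq_slice (χ : Module.Dual k G) (L : G ⊗[k] A) :
    contractL k G χ L = slice χ L := rfl

def liftImplementer (γA : G →ₐ[k] A) (L : G ⊗[k] A) : Module.Dual k G ⊗[k] G →ₗ[k] A :=
  LinearMap.mul' k A ∘ₗ TensorProduct.map (slice.flip L) γA.toLinearMap

@[simp] lemma liftImplementer_tmul (L : G ⊗[k] A) (χ : Module.Dual k G) (a : G) :
    liftImplementer γA L (χ ⊗ₜ[k] a) = slice χ L * γA a := by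
  simp [liftImplementer]

lemma lRel_liftImplementer (L : G ⊗[k] A) : LRel H γA L (liftImplementer γA L) :=
  fun χ a => liftImplementer_tmul L χ a

lemma eq_liftImplementer_of_lRel {L : G ⊗[k] A} {γL : Module.Dual k G ⊗[k] G →ₗ[k] A}
    (h : LRel H γA L γL) : γL = liftImplementer γA L :=
  TensorProduct.ext' fun χ a => by rw [h, liftImplementer_tmul, contractL_eq_slice]

theorem gLConds_liftImplementer [FiniteDimensional k G] (hm : H.CrossChar Ω m)
    {L : G ⊗[k] A} (hL : LConds H γA Ω L) : GLConds H γA m (liftImplementer γA L) := by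
  obtain ⟨hnorm, himpl, hcoh⟩ := hL
  have hε : slice H.ε.toLinearMap L = 1 := by rw [← H.κ1_eq_slice]; exact hnorm
  refine ⟨map_apply_eq_mul_of_tmul m _ fun φf a ψf b => ?_, by simp [QuasiHopfData.oneD, hε],
    fun a => by simp [QuasiHopfData.iD, hε]⟩
  obtain ⟨ι₅, _, O1, O2, O3, O4, O5, hΩ⟩ := exists_sum_tmul_tmul_tmul_tmul Ω
  obtain ⟨ν, _, am1, a0, a1, hδ⟩ := exists_sum_tmul_tmul (H.ΔL a)
  have hcoh' := (H.leg13_mul_leg23_eq_sum_iff L O5 O4 O1 O2 (γA ∘ O3)).mp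
    (hcoh ι₅ inferInstance O1 O2 O3 O4 O5 hΩ)
  have himpl' := (one_tmul_mul_eq_sum_iff (γA a) L (H.S.symm ∘ a1) am1 (γA ∘ a0)).mp
    (himpl a ν inferInstance am1 a0 a1 hδ)
  simp only [Function.comp_apply] at hcoh' himpl'
  rw [hm.mul_tmul hΩ hδ]
  simp only [map_sum, liftImplementer_tmul, map_mul]
  calc ∑ n, ∑ l, slice (H.dmul (shiftF k G (O1 n) (O5 n) φf)
          (shiftF k G (O2 n) (O4 n) (shiftF k G (am1 l) (H.S.symm (a1 l)) ψf))) L *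
          (γA (O3 n) * γA (a0 l) * γA b)
      = ∑ l, (∑ n, slice (H.dmul (shiftF k G (O1 n) (O5 n) φf)
          (shiftF k G (O2 n) (O4 n) (shiftF k G (am1 l) (H.S.symm (a1 l)) ψf))) L *
          γA (O3 n)) * γA (a0 l) * γA b := by
        rw [Finset.sum_comm]
        simp only [Finset.sum_mul, mul_assoc]
    _ = slice φf L * (∑ l, slice (shiftF k G (am1 l) (H.S.symm (a1 l)) ψf) L * γA (a0 l)) *
          γA b := by
        simp only [← hcoh', Finset.mul_sum, Finset.sum_mul, mul_assoc]
    _ = slice φf L * γA a * (slice ψf L * γA b) := by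
        rw [← himpl']
        simp only [mul_assoc]

def implementerOf [FiniteDimensional k G] (γL : Module.Dual k G ⊗[k] G →ₗ[k] A) :
    G ⊗[k] A :=
  ∑ i, Module.finBasis k G i ⊗ₜ[k] γL ((Module.finBasis k G).coord i ⊗ₜ[k] 1)

lemma slice_implementerOf [FiniteDimensional k G] (γL : Module.Dual k G ⊗[k] G →ₗ[k] A)
    (χ : Module.Dual k G) : slice χ (implementerOf γL) = γL (χ ⊗ₜ[k] 1) := by
  simp only [implementerOf, map_sum, slice_tmul, ← map_smul]
  rw [← map_sum]
  simp only [TensorProduct.smul_tmul', ← TensorProduct.sum_tmul,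
    Module.Basis.sum_dual_apply_smul_coord]

lemma eq_implementerOf_of_lRel [FiniteDimensional k G] {L : G ⊗[k] A}
    {γL : Module.Dual k G ⊗[k] G →ₗ[k] A} (h : LRel H γA L γL) : L = implementerOf γL :=
  ext_slice fun χ => by rw [slice_implementerOf, h χ 1, map_one, mul_one, contractL_eq_slice]

lemma map_tmul_of_gLConds [FiniteDimensional k G] (hH : H.IsQuasiHopf) (hm : H.CrossChar Ω m)
    {γL : Module.Dual k G ⊗[k] G →ₗ[k] A} (hG : GLConds H γA m γL)
    (χ : Module.Dual k G) (a : G) : γL (χ ⊗ₜ[k] a) = γL (χ ⊗ₜ[k] 1) * γA a := by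
  obtain ⟨hmul, hone, hext⟩ := hG
  obtain ⟨ι₅, _, O1, O2, O3, O4, O5, hΩ⟩ := exists_sum_tmul_tmul_tmul_tmul Ω
  have h : m (χ ⊗ₜ[k] a) H.oneD = m (χ ⊗ₜ[k] 1) (H.iD a) := by
    simp [QuasiHopfData.oneD, QuasiHopfData.iD, hm.mul_tmul_counit hH hΩ]
  rw [← hext, ← hmul, ← h, hmul, hone, mul_one]

theorem lConds_implementerOf [FiniteDimensional k G] (hH : H.IsQuasiHopf)
    (hm : H.CrossChar Ω m) {γL : Module.Dual k G ⊗[k] G →ₗ[k] A} (hG : GLConds H γA m γL) :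
    LConds H γA Ω (implementerOf γL) ∧ LRel H γA (implementerOf γL) γL := by
  have hrel := map_tmul_of_gLConds hH hm hG
  obtain ⟨hmul, hone, hext⟩ := hG
  refine ⟨⟨?_, fun a ν _ am1 a0 a1 hδ => ?_, fun ι₅ _ O1 O2 O3 O4 O5 hΩ => ?_⟩,
    fun χ a => by rw [hrel, contractL_eq_slice, slice_implementerOf]⟩
  · rw [QuasiHopfData.κ1_eq_slice, slice_implementerOf]
    exact hone
  · obtain ⟨ι₅, _, O1, O2, O3, O4, O5, hΩ⟩ := exists_sum_tmul_tmul_tmul_tmul Ω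
    refine (one_tmul_mul_eq_sum_iff _ _ _ _ _).mpr fun ψ => ?_
    simp only [slice_implementerOf]
    calc γA a * γL (ψ ⊗ₜ[k] 1) = γL (m (H.iD a) (ψ ⊗ₜ[k] 1)) := by rw [hmul, hext]
      _ = ∑ l, γL (m H.oneD (shiftF k G (am1 l) (H.S.symm (a1 l)) ψ ⊗ₜ[k] a0 l)) := by
        rw [QuasiHopfData.iD, TensorProduct.mk_apply, hm.mul_tmul_one hH hΩ hδ, map_sum]
        rfl
      _ = ∑ l, γL (shiftF k G (am1 l) (H.S.symm (a1 l)) ψ ⊗ₜ[k] 1) * γA (a0 l) := by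
        simp only [hmul, hone, one_mul]
        exact Finset.sum_congr rfl fun l _ => hrel _ _
  · refine (H.leg13_mul_leg23_eq_sum_iff _ _ _ _ _ _).mpr fun χ ξ => ?_
    simp only [slice_implementerOf]
    rw [← hmul, hm.mul_one_tmul hH hΩ, map_sum]
    exact Finset.sum_congr rfl fun n _ => by rw [mul_one, hrel]

end QHA

open QHA in
theorem statement10_general
    (k G : Type) [Field k] [Ring G] [Algebra k G] [FiniteDimensional k G]
    (H : QuasiHopfData k G) (hH : H.IsQuasiHopf)
    (A : Type) [Ring A] [Algebra k A] (γA : G →ₐ[k] A)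
    (Ω : G ⊗[k] (G ⊗[k] (G ⊗[k] (G ⊗[k] G))))
    -- the diagonal crossed product multiplication on Ĝ ⊗ G
    (m : (Module.Dual k G ⊗[k] G) →ₗ[k] (Module.Dual k G ⊗[k] G) →ₗ[k]
      (Module.Dual k G ⊗[k] G))
    (hm : H.CrossChar Ω m) :
    (∀ L : G ⊗[k] A, LConds H γA Ω L →
      ∃! γL : Module.Dual k G ⊗[k] G →ₗ[k] A,
        GLConds H γA m γL ∧ LRel H γA L γL) ∧
    (∀ γL : Module.Dual k G ⊗[k] G →ₗ[k] A, GLConds H γA m γL →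
      ∃! L : G ⊗[k] A, LConds H γA Ω L ∧ LRel H γA L γL) :=
  ⟨fun L hL => ⟨liftImplementer γA L, ⟨gLConds_liftImplementer hm hL, lRel_liftImplementer L⟩,
      fun _ h => eq_liftImplementer_of_lRel h.2⟩,
    fun _ hG => ⟨implementerOf _, lConds_implementerOf hH hm hG,
      fun _ h => eq_implementerOf_of_lRel h.2⟩⟩

open QHA in
/-- (Corollary 3.3 of the paper.)  The relation
`γ_L(φ⋈a) = (φ⊗id)(L)·γ(a)` provides a one-to-one correspondence between unital
algebra morphisms `γ_L : Ĝ⋈G → A` extending `γ` and normal coherent left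
diagonal `δ`-implementers `L ∈ G ⊗ A`. -/
theorem statement10
    (k G : Type) [Field k] [Ring G] [Algebra k G] [FiniteDimensional k G]
    (H : QuasiHopfData k G) (hH : H.IsQuasiHopf)
    (A : Type) [Ring A] [Algebra k A] (γA : G →ₐ[k] A)
    (ι ι' ι₂ : Type) [Fintype ι] [Fintype ι'] [Fintype ι₂]
    (X Y Z : ι → G) (P Q R₀ : ι' → G) (T U V W : ι₂ → G)
    (hφ : H.φ = ∑ i : ι, X i ⊗ₜ[k] (Y i ⊗ₜ[k] Z i))
    (hφ' : H.φ' = ∑ j : ι', P j ⊗ₜ[k] (Q j ⊗ₜ[k] R₀ j))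
    (hE : ((1:G) ⊗ₜ[k] H.φ') * H.ooΔ H.φ
        = ∑ i : ι₂, T i ⊗ₜ[k] (U i ⊗ₜ[k] (V i ⊗ₜ[k] W i)))
    (γd f : G ⊗[k] G)
    (hγ : γd = ∑ i : ι₂,
      (H.S (U i) * H.α * V i) ⊗ₜ[k] (H.S (T i) * H.α * W i))
    (hf : f = ∑ i : ι',
      (TensorProduct.map H.S.toLinearMap H.S.toLinearMap (H.Δop (P i))) * γd *
        H.Δ (Q i * H.β * R₀ i))
    (Φinv : G ⊗[k] (G ⊗[k] (G ⊗[k] (G ⊗[k] G))))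
    (hΦ1 : H.bigΦ * Φinv = 1) (hΦ2 : Φinv * H.bigΦ = 1)
    (Ω : G ⊗[k] (G ⊗[k] (G ⊗[k] (G ⊗[k] G))))
    (hΩ : Ω = H.idS2 (QHA.pad45 k G f * Φinv))
    -- the diagonal crossed product multiplication on Ĝ ⊗ G
    (m : (Module.Dual k G ⊗[k] G) →ₗ[k] (Module.Dual k G ⊗[k] G) →ₗ[k]
      (Module.Dual k G ⊗[k] G))
    (hm : H.CrossChar Ω m) :
    (∀ L : G ⊗[k] A, LConds H γA Ω L →
      ∃! γL : Module.Dual k G ⊗[k] G →ₗ[k] A,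
        GLConds H γA m γL ∧ LRel H γA L γL) ∧
    (∀ γL : Module.Dual k G ⊗[k] G →ₗ[k] A, GLConds H γA m γL →
      ∃! L : G ⊗[k] A, LConds H γA Ω L ∧ LRel H γA L γL) :=
  statement10_general k G H hH A γA Ω m hm
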